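/- Iterated global normal form (Corollary 5.4): With the notation of the one-step normal form, for every n ≥ 1, every w ∈ W, every function φ : ℝ → ℂ, and every point x at which both sides are defined: (L_{w_{0,n}} φ)(x) = e^{(i/ħ)𝒱_{w_{0,n}}(x_w)} · (T̂_{L^n(w)} (D̂_{J_{w_{0,n}}(x_w)} (T̂_w^{−1} φ)))(x), where L_{w_{0,n}} := L_{w_{n−1},w_n} ∘ ⋯ ∘ L_{w_0,w_1} is the composition of transfer-operator components along the word, 𝒱_{w_{0,n}}(x_w) := ∑_{k=1}^{n} 𝒱(φ_{w_{0,k}}(x_w)) is the Birkhoff sum, and J_{w_{0,n}}(x_w) := −log (φ_{w_{0,n}})'(x_w). -/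

import Mathlib

open Set

/-- Bi-infinite admissible words. -/
def Wbi (N : ℕ) (adj : Fin N → Fin N → Prop) : Type :=
  {w : ℤ → Fin N // ∀ l : ℤ, adj (w l) (w (l + 1))}

/-- The left shift `L` on bi-infinite admissible words. -/
def Lshift {N : ℕ} {adj : Fin N → Fin N → Prop} (w : Wbi N adj) : Wbi N adj :=
  ⟨fun l => w.1 (l + 1), fun l => w.2 (l + 1)⟩

/-- Forward composition `φ_{w_{0,k}} = φ_{w_{k−1},w_k} ∘ ⋯ ∘ φ_{w_0,w_1}`. -/
def compFwdZ {N : ℕ} (φm : Fin N → Fin N → ℝ → ℝ) (w : ℤ → Fin N) : ℕ → ℝ → ℝ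
  | 0 => id
  | k + 1 => φm (w (k : ℤ)) (w ((k : ℤ) + 1)) ∘ compFwdZ φm w k

/-- `J_{w_{0,n}}(x_w) := −log (φ_{w_{0,n}})'(x_w)`. -/
noncomputable def birkJ {N : ℕ} {adj : Fin N → Fin N → Prop}
    (φm : Fin N → Fin N → ℝ → ℝ) (X : Wbi N adj → ℝ) (w : Wbi N adj) (n : ℕ) : ℝ :=
  -Real.log (deriv (compFwdZ φm w.1 n) (X w))

/-- One component of the transfer operator:
`(L_{i,j} f)(x) := e^{(i/ħ)𝒱(x)} f(φ_{i,j}^{−1}(x))`. -/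
noncomputable def Lop (h : ℝ) (𝒱 : ℝ → ℂ) (φij : ℝ → ℝ) (f : ℝ → ℂ) (x : ℝ) : ℂ :=
  Complex.exp (Complex.I / (h : ℂ) * 𝒱 x) * f (Function.invFun φij x)

/-- Composition `L_{w_{0,n}} := L_{w_{n−1},w_n} ∘ ⋯ ∘ L_{w_0,w_1}` of
transfer-operator components along a word. -/
noncomputable def Lcomp {N : ℕ} (h : ℝ) (𝒱 : ℝ → ℂ) (φm : Fin N → Fin N → ℝ → ℝ)
    (w : ℤ → Fin N) : ℕ → (ℝ → ℂ) → ℝ → ℂ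
  | 0, f => f
  | n + 1, f => Lop h 𝒱 (φm (w (n : ℤ)) (w ((n : ℤ) + 1))) (Lcomp h 𝒱 φm w n f)

/-- The elementary FIO `(T̂_w f)(y) := e^{(i/ħ)Υ_w(y)} f(H_w^{−1}(y − x_w))`. -/
noncomputable def Tfio (h : ℝ) (Υw : ℝ → ℂ) (Hinvw : ℝ → ℝ) (xw : ℝ)
    (f : ℝ → ℂ) (y : ℝ) : ℂ :=
  Complex.exp (Complex.I / (h : ℂ) * Υw y) * f (Hinvw (y - xw))

/-- The inverse FIO `(T̂_w^{-1} f)(z) := e^{−(i/ħ)Υ_w(x_w + H_w(z))} f(x_w + H_w(z))`. -/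
noncomputable def TfioInv (h : ℝ) (Υw : ℝ → ℂ) (Hw : ℝ → ℝ) (xw : ℝ)
    (f : ℝ → ℂ) (z : ℝ) : ℂ :=
  Complex.exp (-(Complex.I / (h : ℂ)) * Υw (xw + Hw z)) * f (xw + Hw z)

/-- The dilation operator `(D̂_λ g)(y) := g(e^λ y)`. -/
noncomputable def Dil (lam : ℝ) (g : ℝ → ℂ) (y : ℝ) : ℂ := g (Real.exp lam * y)

/-!
Put `p k := x_{L^k w} + H_{L^k w}(e^{-J_{w_{0,k}}} z)`. Since `e^{-J}` is the derivative of the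
composed branches, it is a multiplicative cocycle, and the conjugacy equation then says that
`p (k+1) = φ_{w_k,w_{k+1}} (p k)`: the points `p k` form an orbit of the IFS. Along an orbit,
`L_{w_{0,n}}` evaluated at `p n` only collects the phases `𝒱 (p 1), …, 𝒱 (p n)` in front of
`φ (p 0)`, and telescoping the homological equation along the same orbit rewrites their sum as
`Υ_{L^n w}(p n) - Υ_w(p 0)` plus the Birkhoff sum at `x_w`, which is what the right-hand side
evaluates to.
-/

open Finset

variable {N : ℕ} {adj : Fin N → Fin N → Prop}

theorem Lshift_iterate_val (w : Wbi N adj) (k : ℕ) (l : ℤ) :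
    (Lshift^[k] w).1 l = w.1 (l + k) := by
  induction k generalizing w with
  | zero => simp
  | succ k ih =>
    rw [Function.iterate_succ_apply, ih]
    change w.1 (l + k + 1) = _
    rw [Nat.cast_succ, add_assoc]

theorem compFwdZ_one (φm : Fin N → Fin N → ℝ → ℝ) (w : ℤ → Fin N) :
    compFwdZ φm w 1 = φm (w 0) (w 1) :=
  rfl

theorem deriv_compFwdZ_succ (φm : Fin N → Fin N → ℝ → ℝ) {w : ℤ → Fin N} {x : ℝ} {k : ℕ}
    (hφ : DifferentiableAt ℝ (φm (w k) (w (k + 1))) (compFwdZ φm w k x))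
    (hcomp : DifferentiableAt ℝ (compFwdZ φm w k) x) :
    deriv (compFwdZ φm w (k + 1)) x =
      deriv (φm (w k) (w (k + 1))) (compFwdZ φm w k x) * deriv (compFwdZ φm w k) x :=
  deriv_comp x hφ hcomp

theorem deriv_compFwdZ_pos (φm : Fin N → Fin N → ℝ → ℝ) {w : ℤ → Fin N} {x : ℝ}
    (hpos : ∀ k : ℕ, 0 < deriv (φm (w k) (w (k + 1))) (compFwdZ φm w k x)) (n : ℕ) :
    0 < deriv (compFwdZ φm w n) x := by
  induction n with
  | zero => simp [compFwdZ]
  | succ k ih =>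
    rw [deriv_compFwdZ_succ φm (differentiableAt_of_deriv_ne_zero (hpos k).ne')
      (differentiableAt_of_deriv_ne_zero ih.ne')]
    exact mul_pos (hpos k) ih

theorem Lcomp_apply_of_orbit (h : ℝ) (𝒱 : ℝ → ℂ) (φm : Fin N → Fin N → ℝ → ℝ)
    (w : ℤ → Fin N) (f : ℝ → ℂ) (p : ℕ → ℝ) (n : ℕ)
    (hinj : ∀ k < n, Function.Injective (φm (w k) (w (k + 1))))
    (hp : ∀ k < n, p (k + 1) = φm (w k) (w (k + 1)) (p k)) :
    Lcomp h 𝒱 φm w n f (p n) =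
      Complex.exp (Complex.I / h * ∑ k ∈ range n, 𝒱 (p (k + 1))) * f (p 0) := by
  induction n with
  | zero => simp [Lcomp]
  | succ m ih =>
    rw [Lcomp, Lop, hp m m.lt_succ_self, Function.leftInverse_invFun (hinj m m.lt_succ_self),
      ih (fun k hk => hinj k (hk.trans m.lt_succ_self))
        (fun k hk => hp k (hk.trans m.lt_succ_self)),
      ← hp m m.lt_succ_self, sum_range_succ, mul_add, Complex.exp_add]
    ring

section IFS

variable {I : Fin N → Set ℝ} {φm : Fin N → Fin N → ℝ → ℝ} {X : Wbi N adj → ℝ}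

theorem X_Lshift_iterate (hXshift : ∀ w : Wbi N adj, X (Lshift w) = φm (w.1 0) (w.1 1) (X w))
    (w : Wbi N adj) (k : ℕ) : X (Lshift^[k] w) = compFwdZ φm w.1 k (X w) := by
  induction k with
  | zero => rfl
  | succ k ih =>
    rw [Function.iterate_succ_apply', hXshift, Lshift_iterate_val, Lshift_iterate_val, ih,
      zero_add, add_comm (1 : ℤ)]
    rfl

theorem X_Lshift_iterate_mem (hXmem : ∀ w : Wbi N adj, X w ∈ I (w.1 0)) (w : Wbi N adj)
    (k : ℕ) : X (Lshift^[k] w) ∈ I (w.1 k) := by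
  simpa [Lshift_iterate_val] using hXmem (Lshift^[k] w)

theorem deriv_step_pos (hpos : ∀ i j, adj i j → ∀ x ∈ I i, 0 < deriv (φm i j) x)
    (hXmem : ∀ w : Wbi N adj, X w ∈ I (w.1 0))
    (hXshift : ∀ w : Wbi N adj, X (Lshift w) = φm (w.1 0) (w.1 1) (X w))
    (w : Wbi N adj) (k : ℕ) :
    0 < deriv (φm (w.1 k) (w.1 (k + 1))) (compFwdZ φm w.1 k (X w)) := by
  rw [← X_Lshift_iterate hXshift]
  exact hpos _ _ (w.2 k) _ (X_Lshift_iterate_mem hXmem w k)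

theorem exp_neg_birkJ (hpos : ∀ i j, adj i j → ∀ x ∈ I i, 0 < deriv (φm i j) x)
    (hXmem : ∀ w : Wbi N adj, X w ∈ I (w.1 0))
    (hXshift : ∀ w : Wbi N adj, X (Lshift w) = φm (w.1 0) (w.1 1) (X w))
    (w : Wbi N adj) (n : ℕ) :
    Real.exp (-birkJ φm X w n) = deriv (compFwdZ φm w.1 n) (X w) :=
  (congrArg Real.exp (neg_neg _)).trans <| Real.exp_log <|
    deriv_compFwdZ_pos φm (deriv_step_pos hpos hXmem hXshift w) n

theorem exp_neg_birkJ_succ (hpos : ∀ i j, adj i j → ∀ x ∈ I i, 0 < deriv (φm i j) x)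
    (hXmem : ∀ w : Wbi N adj, X w ∈ I (w.1 0))
    (hXshift : ∀ w : Wbi N adj, X (Lshift w) = φm (w.1 0) (w.1 1) (X w))
    (w : Wbi N adj) (k : ℕ) :
    Real.exp (-birkJ φm X w (k + 1)) =
      Real.exp (-birkJ φm X (Lshift^[k] w) 1) * Real.exp (-birkJ φm X w k) := by
  have hcomp : 0 < deriv (compFwdZ φm w.1 k) (X w) :=
    exp_neg_birkJ hpos hXmem hXshift w k ▸ Real.exp_pos _
  simp only [exp_neg_birkJ hpos hXmem hXshift]
  rw [deriv_compFwdZ_succ φm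
      (differentiableAt_of_deriv_ne_zero (deriv_step_pos hpos hXmem hXshift w k).ne')
      (differentiableAt_of_deriv_ne_zero hcomp.ne'),
    compFwdZ_one, Lshift_iterate_val, Lshift_iterate_val, X_Lshift_iterate hXshift, zero_add,
    add_comm (1 : ℤ)]

theorem birkJ_zero (φm : Fin N → Fin N → ℝ → ℝ) (X : Wbi N adj → ℝ) (w : Wbi N adj) :
    birkJ φm X w 0 = 0 := by
  simp [birkJ, compFwdZ]

theorem orbit_succ (hpos : ∀ i j, adj i j → ∀ x ∈ I i, 0 < deriv (φm i j) x)
    (hXmem : ∀ w : Wbi N adj, X w ∈ I (w.1 0))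
    (hXshift : ∀ w : Wbi N adj, X (Lshift w) = φm (w.1 0) (w.1 1) (X w))
    {ε : ℝ} {H : Wbi N adj → ℝ → ℝ}
    (hconj : ∀ w : Wbi N adj, ∀ z ∈ Ioo (-ε) ε,
      H (Lshift w) (Real.exp (-birkJ φm X w 1) * z) =
        φm (w.1 0) (w.1 1) (H w z + X w) - X (Lshift w))
    (w : Wbi N adj) (z : ℝ) (k : ℕ) (hz : Real.exp (-birkJ φm X w k) * z ∈ Ioo (-ε) ε) :
    X (Lshift^[k + 1] w) + H (Lshift^[k + 1] w) (Real.exp (-birkJ φm X w (k + 1)) * z) =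
      φm (w.1 k) (w.1 (k + 1))
        (X (Lshift^[k] w) + H (Lshift^[k] w) (Real.exp (-birkJ φm X w k) * z)) := by
  rw [exp_neg_birkJ_succ hpos hXmem hXshift, mul_assoc, Function.iterate_succ_apply',
    hconj _ _ hz, Lshift_iterate_val, Lshift_iterate_val, zero_add, add_comm (1 : ℤ),
    add_comm (H _ _)]
  ring

theorem Υ_Lshift_iterate_of_orbit {𝒱 : ℝ → ℂ} {Υ : Wbi N adj → ℝ → ℂ}
    (hΥhom : ∀ w : Wbi N adj, ∀ y ∈ I (w.1 0),
      Υ (Lshift w) (φm (w.1 0) (w.1 1) y) =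
        Υ w y + 𝒱 (φm (w.1 0) (w.1 1) y) - 𝒱 (X (Lshift w)))
    (w : Wbi N adj) (p : ℕ → ℝ) (n : ℕ)
    (hp : ∀ k < n, p (k + 1) = φm (w.1 k) (w.1 (k + 1)) (p k))
    (hpI : ∀ k < n, p k ∈ I (w.1 k)) :
    Υ (Lshift^[n] w) (p n) =
      Υ w (p 0) + ∑ k ∈ range n, (𝒱 (p (k + 1)) - 𝒱 (X (Lshift^[k + 1] w))) := by
  induction n with
  | zero => simp
  | succ m ih =>
    have hstep := hΥhom (Lshift^[m] w) (p m)
      (by rw [Lshift_iterate_val, zero_add]; exact hpI m m.lt_succ_self)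
    rw [Lshift_iterate_val, Lshift_iterate_val, zero_add, add_comm (1 : ℤ),
      ← hp m m.lt_succ_self, ← Function.iterate_succ_apply' Lshift] at hstep
    rw [hstep, ih (fun k hk => hp k (hk.trans m.lt_succ_self))
      (fun k hk => hpI k (hk.trans m.lt_succ_self)), sum_range_succ]
    ring

end IFS

theorem iterated_normal_form_general
    {N : ℕ}
    (I : Fin N → Set ℝ)
    (adj : Fin N → Fin N → Prop)
    (φm : Fin N → Fin N → ℝ → ℝ)
    (θ : ℝ)
    (hcontr : ∀ i j, adj i j → ∀ x ∈ I i, 0 < deriv (φm i j) x ∧ deriv (φm i j) x ≤ θ)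
    (hinj : ∀ i j, adj i j → Function.Injective (φm i j))
    (h : ℝ)
    (𝒱 : ℝ → ℂ)
    (X : Wbi N adj → ℝ)
    (hXmem : ∀ w : Wbi N adj, X w ∈ I (w.1 0))
    (hXshift : ∀ w : Wbi N adj, X (Lshift w) = φm (w.1 0) (w.1 1) (X w))
    (Υ : Wbi N adj → ℝ → ℂ)
    (hΥhom : ∀ w : Wbi N adj, ∀ y ∈ I (w.1 0),
      Υ (Lshift w) (φm (w.1 0) (w.1 1) y) =
        Υ w y + 𝒱 (φm (w.1 0) (w.1 1) y) - 𝒱 (X (Lshift w)))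
    (ε : ℝ)
    (H Hinv : Wbi N adj → ℝ → ℝ)
    (hHinv : ∀ w : Wbi N adj, ∀ z ∈ Set.Ioo (-ε) ε, Hinv w (H w z) = z)
    (hconj : ∀ w : Wbi N adj, ∀ z ∈ Set.Ioo (-ε) ε,
      H (Lshift w) (Real.exp (-(birkJ φm X w 1)) * z) =
        φm (w.1 0) (w.1 1) (H w z + X w) - X (Lshift w)) :
    ∀ w : Wbi N adj, ∀ n : ℕ, 1 ≤ n → ∀ φfun : ℝ → ℂ, ∀ z : ℝ,
      (∀ k : ℕ, k ≤ n →
        Real.exp (-(birkJ φm X w k)) * z ∈ Set.Ioo (-ε) ε ∧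
        X (Lshift^[k] w) + H (Lshift^[k] w) (Real.exp (-(birkJ φm X w k)) * z) ∈
          I (w.1 (k : ℤ))) →
      Lcomp h 𝒱 φm w.1 n φfun
          (X (Lshift^[n] w) + H (Lshift^[n] w) (Real.exp (-(birkJ φm X w n)) * z)) =
        Complex.exp (Complex.I / (h : ℂ) *
            ∑ k ∈ Finset.range n, 𝒱 (compFwdZ φm w.1 (k + 1) (X w))) *
          Tfio h (Υ (Lshift^[n] w)) (Hinv (Lshift^[n] w)) (X (Lshift^[n] w))
            (Dil (birkJ φm X w n) (TfioInv h (Υ w) (H w) (X w) φfun))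
            (X (Lshift^[n] w) + H (Lshift^[n] w) (Real.exp (-(birkJ φm X w n)) * z)) := by
  intro w n _ φfun z hyp
  have hpos : ∀ i j, adj i j → ∀ x ∈ I i, 0 < deriv (φm i j) x :=
    fun i j hij x hx => (hcontr i j hij x hx).1
  set p : ℕ → ℝ := fun k =>
    X (Lshift^[k] w) + H (Lshift^[k] w) (Real.exp (-birkJ φm X w k) * z)
  have hp : ∀ k < n, p (k + 1) = φm (w.1 k) (w.1 (k + 1)) (p k) :=
    fun k hk => orbit_succ hpos hXmem hXshift hconj w z k (hyp k hk.le).1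
  have hp0 : p 0 = X w + H w z := by simp [p, birkJ_zero]
  have hBirkhoff : ∑ k ∈ range n, 𝒱 (p (k + 1)) = Υ (Lshift^[n] w) (p n) - Υ w (p 0) +
      ∑ k ∈ range n, 𝒱 (compFwdZ φm w.1 (k + 1) (X w)) := by
    rw [Υ_Lshift_iterate_of_orbit hΥhom w p n hp (fun k hk => (hyp k hk.le).2),
      sum_sub_distrib]
    simp only [X_Lshift_iterate hXshift]
    ring
  change Lcomp h 𝒱 φm w.1 n φfun (p n) = _ * Tfio h _ _ _ _ (p n)
  rw [Lcomp_apply_of_orbit h 𝒱 φm w.1 φfun p n (fun k _ => hinj _ _ (w.2 k)) hp, hBirkhoff]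
  have hHinv_n :
      Hinv (Lshift^[n] w) (p n - X (Lshift^[n] w)) = Real.exp (-birkJ φm X w n) * z :=
    (congrArg _ (add_sub_cancel_left _ _)).trans (hHinv _ _ (hyp n le_rfl).1)
  have hdil : Real.exp (birkJ φm X w n) * (Real.exp (-birkJ φm X w n) * z) = z := by
    rw [← mul_assoc, ← Real.exp_add, add_neg_cancel, Real.exp_zero, one_mul]
  simp only [Tfio, Dil, TfioInv, hHinv_n, hdil, ← hp0, ← mul_assoc, ← Complex.exp_add]
  congr 2
  ring

/-- **Iterated global normal form** (Corollary 5.4). For every `n ≥ 1` the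
iterated transfer operator along a word satisfies
`(L_{w_{0,n}} φ)(x) = e^{(i/ħ)𝒱_{w_{0,n}}(x_w)}
(T̂_{L^n(w)} D̂_{J_{w_{0,n}}(x_w)} T̂_w^{−1} φ)(x)` at every admissible point
`x = x_{L^n(w)} + H_{L^n(w)}(e^{−J_{w_{0,n}}(x_w)} z)`, `z ∈ 𝒥`, where
`𝒱_{w_{0,n}}(x_w) = ∑_{k=1}^n 𝒱(φ_{w_{0,k}}(x_w))` is the Birkhoff sum. -/
theorem iterated_normal_form
    {N : ℕ} (hN : 1 ≤ N)
    (I : Fin N → Set ℝ)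
    (hIcc : ∀ i, ∃ a b : ℝ, a ≤ b ∧ I i = Set.Icc a b)
    (hIdisj : ∀ i j, i ≠ j → Disjoint (I i) (I j))
    (adj : Fin N → Fin N → Prop)
    (htrans : ∃ T : ℕ, 0 < T ∧ ∀ i j, ∃ p : ℕ → Fin N,
      p 0 = i ∧ p T = j ∧ ∀ k < T, adj (p k) (p (k + 1)))
    (φm : Fin N → Fin N → ℝ → ℝ)
    (θ : ℝ) (hθ0 : 0 < θ) (hθ1 : θ < 1)
    (hsmooth : ∀ i j, adj i j → ContDiff ℝ (⊤ : ℕ∞) (φm i j))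
    (hcontr : ∀ i j, adj i j → ∀ x ∈ I i, 0 < deriv (φm i j) x ∧ deriv (φm i j) x ≤ θ)
    (hinto : ∀ i j, adj i j → φm i j '' I i ⊆ interior (I j))
    (hsep : ∀ i j k l, adj i j → adj k l → (i, j) ≠ (k, l) →
      Disjoint (φm i j '' I i) (φm k l '' I k))
    (hinj : ∀ i j, adj i j → Function.Injective (φm i j))
    (h : ℝ) (hh : 0 < h)
    (τ : ℝ → ℝ) (hτ : ContDiff ℝ (⊤ : ℕ∞) τ)
    (V : ℝ → ℂ) (hV : ContDiff ℝ (⊤ : ℕ∞) V)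
    (𝒱 : ℝ → ℂ) (h𝒱 : ∀ x, 𝒱 x = (τ x : ℂ) - Complex.I * h * V x)
    (X : Wbi N adj → ℝ)
    (hXmem : ∀ w : Wbi N adj, X w ∈ I (w.1 0))
    (hXshift : ∀ w : Wbi N adj, X (Lshift w) = φm (w.1 0) (w.1 1) (X w))
    (Υ : Wbi N adj → ℝ → ℂ)
    (hΥhom : ∀ w : Wbi N adj, ∀ y ∈ I (w.1 0),
      Υ (Lshift w) (φm (w.1 0) (w.1 1) y) =
        Υ w y + 𝒱 (φm (w.1 0) (w.1 1) y) - 𝒱 (X (Lshift w)))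
    (ε : ℝ) (hε : 0 < ε)
    (H Hinv : Wbi N adj → ℝ → ℝ)
    (hH0 : ∀ w, H w 0 = 0) (hH1 : ∀ w, deriv (H w) 0 = 1)
    (hHinv : ∀ w : Wbi N adj, ∀ z ∈ Set.Ioo (-ε) ε, Hinv w (H w z) = z)
    (hconj : ∀ w : Wbi N adj, ∀ z ∈ Set.Ioo (-ε) ε,
      H (Lshift w) (Real.exp (-(birkJ φm X w 1)) * z) =
        φm (w.1 0) (w.1 1) (H w z + X w) - X (Lshift w)) :
    ∀ w : Wbi N adj, ∀ n : ℕ, 1 ≤ n → ∀ φfun : ℝ → ℂ, ∀ z : ℝ,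
      (∀ k : ℕ, k ≤ n →
        Real.exp (-(birkJ φm X w k)) * z ∈ Set.Ioo (-ε) ε ∧
        X (Lshift^[k] w) + H (Lshift^[k] w) (Real.exp (-(birkJ φm X w k)) * z) ∈
          I (w.1 (k : ℤ))) →
      Lcomp h 𝒱 φm w.1 n φfun
          (X (Lshift^[n] w) + H (Lshift^[n] w) (Real.exp (-(birkJ φm X w n)) * z)) =
        Complex.exp (Complex.I / (h : ℂ) *
            ∑ k ∈ Finset.range n, 𝒱 (compFwdZ φm w.1 (k + 1) (X w))) *
          Tfio h (Υ (Lshift^[n] w)) (Hinv (Lshift^[n] w)) (X (Lshift^[n] w))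
            (Dil (birkJ φm X w n) (TfioInv h (Υ w) (H w) (X w) φfun))
            (X (Lshift^[n] w) + H (Lshift^[n] w) (Real.exp (-(birkJ φm X w n)) * z)) :=
  iterated_normal_form_general I adj φm θ hcontr hinj h 𝒱 X hXmem hXshift Υ hΥhom ε H Hinv hHinv
    hconj
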